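/- arXiv:math/0608410 — 4 statements merged into one kernel-verified Lean document; each statement's English description precedes it below -/
import Mathlib

section
/- Let ν > 0 and let Y : ℂ → ℂ be entire with |Y(p)| ≤ exp(ν·|p|) for all p ∈ ℂ. Then for every real x > e^{ν−1}, the Laplace transform ∫_0^∞ Y(t) e^{−xt} dt converges absolutely and equals the absolutely convergent series ∑_{k=0}^∞ Y⁽ᵏ⁾(0) x^{−k−1}. -/
/-!
Cauchy's estimate on the circle of radius `n / ν`, combined with the Stirling upper bound
`n! ≤ e √n (n / e)ⁿ`, gives `‖Y⁽ⁿ⁾(0)‖ ≤ e √n νⁿ`. As `ν ≤ e^{ν-1} < x`, the series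
`∑ Y⁽ᵏ⁾(0) x^{-k-1}` is dominated by `∑ k (ν / x)ᵏ`. Since `∫₀^∞ tᵏ e^{-xt} dt = k! / x^{k+1}`,
it is the termwise Laplace transform of the Taylor series of `Y`, and absolute convergence of
the termwise integrals lets us exchange sum and integral.
-/

open MeasureTheory Set Filter
open scoped Nat

theorem Stirling.factorial_le_exp_one_mul_sqrt_mul {n : ℕ} (hn : n ≠ 0) :
    (n ! : ℝ) ≤ Real.exp 1 * √n * (n / Real.exp 1) ^ n := by
  have hle : stirlingSeq n ≤ stirlingSeq 1 := by
    obtain ⟨m, rfl⟩ := Nat.exists_eq_add_of_le' (Nat.one_le_iff_ne_zero.mpr hn)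
    exact stirlingSeq'_antitone (Nat.zero_le m)
  rw [stirlingSeq_one, stirlingSeq, div_le_iff₀ (by positivity)] at hle
  calc (n ! : ℝ) ≤ Real.exp 1 / √2 * (√(2 * n) * (n / Real.exp 1) ^ n) := hle
    _ = Real.exp 1 * √n * (n / Real.exp 1) ^ n := by
      rw [Real.sqrt_mul zero_le_two]; field_simp

theorem norm_iteratedDeriv_zero_le_of_norm_le_exp {ν : ℝ} (hν : 0 < ν) {Y : ℂ → ℂ}
    (hY : Differentiable ℂ Y) (hbound : ∀ p : ℂ, ‖Y p‖ ≤ Real.exp (ν * ‖p‖))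
    {n : ℕ} (hn : n ≠ 0) :
    ‖iteratedDeriv n Y 0‖ ≤ Real.exp 1 * √n * ν ^ n := by
  have hn' : (0 : ℝ) < n := by positivity
  -- the radius `n / ν` minimises `exp (ν R) / R ^ n`
  have hcauchy := Complex.norm_iteratedDeriv_le_of_forall_mem_sphere_norm_le n
    (div_pos hn' hν) hY.diffContOnCl (C := Real.exp n) fun z hz => by
      rw [mem_sphere_zero_iff_norm] at hz
      simpa [hz, mul_div_cancel₀ _ hν.ne'] using hbound z
  calc ‖iteratedDeriv n Y 0‖ ≤ n ! * Real.exp n / (n / ν) ^ n := hcauchy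
    _ ≤ Real.exp 1 * √n * (n / Real.exp 1) ^ n * Real.exp n / (n / ν) ^ n := by
      gcongr; exact Stirling.factorial_le_exp_one_mul_sqrt_mul hn
    _ = Real.exp 1 * √n * ν ^ n := by
      rw [← Real.exp_one_pow, div_pow, div_pow]; field_simp

theorem summable_norm_iteratedDeriv_div_pow {ν : ℝ} (hν : 0 < ν) {Y : ℂ → ℂ}
    (hY : Differentiable ℂ Y) (hbound : ∀ p : ℂ, ‖Y p‖ ≤ Real.exp (ν * ‖p‖))
    {x : ℝ} (hνx : ν < x) :
    Summable fun k : ℕ => ‖iteratedDeriv k Y 0 / (x : ℂ) ^ (k + 1)‖ := by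
  have hx : 0 < x := hν.trans hνx
  have hgeom : Summable fun k : ℕ => Real.exp 1 / x * ((k : ℝ) ^ 1 * (ν / x) ^ k) :=
    (summable_pow_mul_geometric_of_norm_lt_one (R := ℝ) (r := ν / x) 1 <| by
      rwa [Real.norm_of_nonneg (by positivity), div_lt_one hx]).mul_left _
  refine .of_norm_bounded_eventually_nat hgeom <| (eventually_ne_atTop 0).mono fun k hk => ?_
  have hsqrt : √(k : ℝ) ≤ k := Real.sqrt_le_self_iff.mpr <|
    .inr (Nat.one_le_cast.mpr (Nat.one_le_iff_ne_zero.mpr hk))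
  calc ‖‖iteratedDeriv k Y 0 / (x : ℂ) ^ (k + 1)‖‖ = ‖iteratedDeriv k Y 0‖ / x ^ (k + 1) := by
        simp [abs_of_pos hx]
    _ ≤ Real.exp 1 * k * ν ^ k / x ^ (k + 1) := by
        gcongr
        exact (norm_iteratedDeriv_zero_le_of_norm_le_exp hν hY hbound hk).trans (by gcongr)
    _ = Real.exp 1 / x * ((k : ℝ) ^ 1 * (ν / x) ^ k) := by
        rw [pow_succ, div_pow]; field_simp

theorem integrableOn_mul_exp_neg_mul_Ioi_of_norm_le_exp {ν x : ℝ} (hνx : ν < x) {f : ℝ → ℂ}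
    (hf : Continuous f) (hbound : ∀ t > 0, ‖f t‖ ≤ Real.exp (ν * t)) :
    IntegrableOn (fun t : ℝ => f t * Complex.exp (-(x : ℂ) * t)) (Ioi 0) := by
  refine (exp_neg_integrableOn_Ioi 0 (sub_pos.mpr hνx)).mono'
    (by fun_prop : Continuous _).aestronglyMeasurable.restrict ?_
  refine (ae_restrict_iff' measurableSet_Ioi).mpr (.of_forall fun t ht => ?_)
  calc ‖f t * Complex.exp (-(x : ℂ) * t)‖ = ‖f t‖ * Real.exp (-(x * t)) := by
        rw [norm_mul, Complex.norm_exp]; simp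
    _ ≤ Real.exp (ν * t) * Real.exp (-(x * t)) := by gcongr; exact hbound t ht
    _ = Real.exp (-(x - ν) * t) := by rw [← Real.exp_add]; ring_nf

theorem integrableOn_pow_mul_exp_neg_mul_Ioi (k : ℕ) {x : ℝ} (hx : 0 < x) :
    IntegrableOn (fun t : ℝ => t ^ k * Real.exp (-(x * t))) (Ioi 0) := by
  simpa [Real.rpow_natCast] using
    integrableOn_rpow_mul_exp_neg_mul_rpow (p := 1) (s := k) (by linarith [k.cast_nonneg (α := ℝ)])
      zero_lt_one hx

theorem integral_pow_mul_exp_neg_mul_Ioi (k : ℕ) {x : ℝ} (hx : 0 < x) :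
    ∫ t in Ioi (0 : ℝ), t ^ k * Real.exp (-(x * t)) = k ! / x ^ (k + 1) := by
  have h := Real.integral_rpow_mul_exp_neg_mul_Ioi (a := (k + 1 : ℕ)) (by positivity) hx
  rw [Nat.cast_add_one, add_sub_cancel_right, Real.Gamma_nat_eq_factorial, ← Nat.cast_add_one] at h
  simp only [Real.rpow_natCast] at h
  rw [h, one_div, inv_pow, inv_mul_eq_div]

theorem hasSum_iteratedDeriv_div_pow_integral_mul_exp_neg {Y : ℂ → ℂ} (hY : Differentiable ℂ Y)
    {x : ℝ} (hx : 0 < x)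
    (hsum : Summable fun k : ℕ => ‖iteratedDeriv k Y 0 / (x : ℂ) ^ (k + 1)‖) :
    HasSum (fun k : ℕ => iteratedDeriv k Y 0 / (x : ℂ) ^ (k + 1))
      (∫ t in Ioi (0 : ℝ), Y t * Complex.exp (-(x : ℂ) * t)) := by
  set c : ℕ → ℂ := fun k => (k ! : ℂ)⁻¹ * iteratedDeriv k Y 0
  set F : ℕ → ℝ → ℂ := fun k t => c k * ((t ^ k * Real.exp (-(x * t)) : ℝ) : ℂ)
  have hF_tsum (t : ℝ) : ∑' k, F k t = Y t * Complex.exp (-(x : ℂ) * t) := by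
    have h := (Complex.hasSum_taylorSeries_of_entire hY 0 t).mul_right (Complex.exp (-(x : ℂ) * t))
    refine (tsum_congr fun k => ?_).trans h.tsum_eq
    simp only [F, c, smul_eq_mul, sub_zero]
    push_cast
    rw [neg_mul]
    ring
  have hF_int (k : ℕ) : IntegrableOn (F k) (Ioi 0) :=
    (integrableOn_pow_mul_exp_neg_mul_Ioi k hx).ofReal.const_mul (c k)
  have hF_integral (k : ℕ) :
      ∫ t in Ioi 0, F k t = iteratedDeriv k Y 0 / (x : ℂ) ^ (k + 1) := by
    rw [integral_const_mul, integral_complex_ofReal, integral_pow_mul_exp_neg_mul_Ioi k hx]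
    simp only [c]
    push_cast
    field_simp [Nat.factorial_ne_zero]
  have hF_integral_norm (k : ℕ) :
      ∫ t in Ioi 0, ‖F k t‖ = ‖iteratedDeriv k Y 0 / (x : ℂ) ^ (k + 1)‖ := calc
    ∫ t in Ioi 0, ‖F k t‖ = ∫ t in Ioi 0, ‖c k‖ * (t ^ k * Real.exp (-(x * t))) :=
        setIntegral_congr_fun measurableSet_Ioi fun t (ht : 0 < t) => by
          rw [norm_mul, Complex.norm_real, Real.norm_of_nonneg (by positivity)]
    _ = ‖c k‖ * (k ! / x ^ (k + 1)) := by
        rw [integral_const_mul, integral_pow_mul_exp_neg_mul_Ioi k hx]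
    _ = ‖iteratedDeriv k Y 0 / (x : ℂ) ^ (k + 1)‖ := by
        simp only [c, norm_mul, norm_inv, RCLike.norm_natCast, norm_div, norm_pow,
          Complex.norm_real, Real.norm_of_nonneg hx.le]
        field_simp
  have h := hasSum_integral_of_summable_integral_norm hF_int
    (hsum.congr fun k => (hF_integral_norm k).symm)
  simpa only [hF_integral, hF_tsum] using h

/-- If `Y` is entire with `|Y(p)| ≤ exp(ν |p|)`, then for real `x > e^{ν-1}`
the Laplace transform `∫_0^∞ Y(t) e^{-xt} dt` converges absolutely and equals
the absolutely convergent series `∑ Y⁽ᵏ⁾(0) x^{-k-1}`. -/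
theorem stmt_1 (ν : ℝ) (hν : 0 < ν) (Y : ℂ → ℂ)
    (hY : Differentiable ℂ Y)
    (hbound : ∀ p : ℂ, ‖Y p‖ ≤ Real.exp (ν * ‖p‖))
    (x : ℝ) (hx : Real.exp (ν - 1) < x) :
    IntegrableOn (fun t : ℝ => Y t * Complex.exp (-(x : ℂ) * t)) (Set.Ioi 0) ∧
    Summable (fun k : ℕ => ‖iteratedDeriv k Y 0 / (x : ℂ) ^ (k + 1)‖) ∧
    HasSum (fun k : ℕ => iteratedDeriv k Y 0 / (x : ℂ) ^ (k + 1))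
      (∫ t in Set.Ioi (0 : ℝ), Y t * Complex.exp (-(x : ℂ) * t)) := by
  have hνx : ν < x := (by linarith [Real.add_one_le_exp (ν - 1)] : ν ≤ Real.exp (ν - 1)).trans_lt hx
  have hsum := summable_norm_iteratedDeriv_div_pow hν hY hbound hνx
  refine ⟨?_, hsum, hasSum_iteratedDeriv_div_pow_integral_mul_exp_neg hY (hν.trans hνx) hsum⟩
  refine integrableOn_mul_exp_neg_mul_Ioi_of_norm_le_exp hνx (hY.continuous.comp
    Complex.continuous_ofReal) fun t ht => ?_
  simpa [abs_of_pos ht] using hbound t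
end

section
/- There exist constants c₁, c₂ > 0 such that for every real x ≥ 1: c₁ · x^{−1/2} e^{−x} ≤ ⌊x⌋! · x^{−⌊x⌋−1} ≤ c₂ · x^{−1/2} e^{−x}, and moreover c₁ · x^{−1/2} e^{−x} ≤ min_{k ∈ ℕ} k! x^{−k−1} ≤ c₂ · x^{−1/2} e^{−x}. -/
/-!
The terms `k! / x^(k+1)` decrease while `k + 1 ≤ x` and increase afterwards, so for
`n ≤ x ≤ n + 1` the least one is `n! / x^(n+1)`. Writing it as
`stirlingSeq n * (n/x)^n e^(x-n) √(2n/x) * x^(-1/2) e^(-x)`, the Stirling sequence lies in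
`[√π, e/√2]` (it decreases to `√π`), and the middle factor lies in `[e⁻¹, √2 e]`, the lower bound
`(n/x)^n ≥ (1 + 1/n)^(-n) ≥ e⁻¹` being the only non-trivial one.
-/

open Real Nat

/-- `k!/n!` is a product of `|k - n|` integers, each at least `x` when `n < k` and at most `x`
when `k < n`. -/
theorem factorial_div_pow_succ_le_of_le_of_le_add_one {n : ℕ} {x : ℝ} (hnx : n ≤ x)
    (hxn : x ≤ n + 1) (hx : 0 < x) (k : ℕ) : (n ! : ℝ) / x ^ (n + 1) ≤ k ! / x ^ (k + 1) := by
  rw [div_le_div_iff₀ (by positivity) (by positivity), pow_succ, pow_succ, ← mul_assoc,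
    ← mul_assoc]
  gcongr ?_ * x
  rcases le_total n k with h | h
  · obtain ⟨j, rfl⟩ := Nat.exists_eq_add_of_le h
    calc (n ! : ℝ) * x ^ (n + j) = n ! * x ^ j * x ^ n := by ring
      _ ≤ n ! * ((n + 1 : ℕ) : ℝ) ^ j * x ^ n := by gcongr; push_cast; exact hxn
      _ ≤ (n + j)! * x ^ n := by
        rw [← factorial_mul_ascFactorial, Nat.cast_mul]
        gcongr
        exact_mod_cast pow_succ_le_ascFactorial (n + 1) j
  · obtain ⟨j, rfl⟩ := Nat.exists_eq_add_of_le h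
    calc ((k + j)! : ℝ) * x ^ k = k ! * ((k + 1).ascFactorial j : ℕ) * x ^ k := by
          rw [← factorial_mul_ascFactorial]; push_cast; ring
      _ ≤ k ! * ((k + j : ℕ) : ℝ) ^ j * x ^ k := by
        gcongr
        exact_mod_cast ascFactorial_le_pow_add k j
      _ ≤ k ! * x ^ j * x ^ k := by gcongr
      _ = k ! * x ^ (k + j) := by ring

theorem Stirling.stirlingSeq_le_exp_one_div_sqrt_two {n : ℕ} (hn : n ≠ 0) :
    stirlingSeq n ≤ exp 1 / √2 := by
  simpa [Nat.sub_add_cancel (Nat.pos_of_ne_zero hn)] using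
    stirlingSeq'_antitone (Nat.zero_le (n - 1))

theorem rpow_neg_one_div_two {x : ℝ} (hx : 0 ≤ x) : x ^ (-(1 : ℝ) / 2) = (√x)⁻¹ := by
  rw [neg_div, rpow_neg hx, sqrt_eq_rpow]

/-- The ratio of `√(2n) (n/e)^n / x^(n+1)` to `x^(-1/2) e^(-x)`. -/
noncomputable def floorStirlingFactor (n : ℕ) (x : ℝ) : ℝ :=
  (n / x) ^ n * exp (x - n) * √(2 * n / x)

theorem factorial_div_pow_succ_eq {n : ℕ} (hn : n ≠ 0) {x : ℝ} (hx : 0 < x) :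
    (n ! : ℝ) / x ^ (n + 1) =
      Stirling.stirlingSeq n * floorStirlingFactor n x * (x ^ (-(1 : ℝ) / 2) * exp (-x)) := by
  have hsx : 0 < √x := sqrt_pos.2 hx
  have h2n : 0 < √(2 * n) := sqrt_pos.2 (by positivity)
  rw [Stirling.stirlingSeq, floorStirlingFactor, rpow_neg_one_div_two hx.le,
    sqrt_div (by positivity), exp_sub, exp_neg, div_pow, div_pow, ← exp_nat_mul, mul_one]
  field_simp
  rw [sq_sqrt hx.le, pow_succ]

theorem inv_exp_one_le_floorStirlingFactor {n : ℕ} (hn : n ≠ 0) {x : ℝ} (hnx : n ≤ x)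
    (hxn : x ≤ n + 1) : (exp 1)⁻¹ ≤ floorStirlingFactor n x := by
  have hx : 0 < x := lt_of_lt_of_le (by positivity) hnx
  have hpow : (exp 1)⁻¹ ≤ (n / x) ^ n := by
    rw [← inv_div, inv_pow]
    refine inv_anti₀ (by positivity) (le_trans ?_ (one_add_inv_pow_le_exp (n := n)))
    gcongr
    rw [div_le_iff₀ (by positivity)]
    field_simp
    linarith
  have hexp : 1 ≤ exp (x - n) := one_le_exp (by linarith)
  have hsqrt : 1 ≤ √(2 * n / x) := by
    have : (1 : ℝ) ≤ n := by exact_mod_cast Nat.one_le_iff_ne_zero.2 hn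
    rw [one_le_sqrt, one_le_div hx]
    linarith
  calc (exp 1)⁻¹ = (exp 1)⁻¹ * 1 * 1 := by ring
    _ ≤ floorStirlingFactor n x := by unfold floorStirlingFactor; gcongr

theorem floorStirlingFactor_le {n : ℕ} {x : ℝ} (hnx : n ≤ x) (hxn : x ≤ n + 1) (hx : 0 < x) :
    floorStirlingFactor n x ≤ √2 * exp 1 := by
  have hpow : (n / x) ^ n ≤ 1 := pow_le_one₀ (by positivity) (div_le_one_of_le₀ hnx hx.le)
  have hexp : exp (x - n) ≤ exp 1 := exp_le_exp.2 (by linarith)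
  have hsqrt : √(2 * n / x) ≤ √2 := sqrt_le_sqrt (by rw [div_le_iff₀ hx]; linarith)
  calc floorStirlingFactor n x ≤ 1 * exp 1 * √2 := by unfold floorStirlingFactor; gcongr
    _ = √2 * exp 1 := by ring

/-- The least term of the series `∑ k! x^{-k-1}` occurs at `k = ⌊x⌋` and
has magnitude proportional to `x^{-1/2} e^{-x}`. -/
theorem stmt_12 :
    ∃ c₁ : ℝ, 0 < c₁ ∧ ∃ c₂ : ℝ, 0 < c₂ ∧ ∀ x : ℝ, 1 ≤ x →
      (c₁ * x ^ (-(1 : ℝ) / 2) * Real.exp (-x) ≤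
          (Nat.factorial ⌊x⌋₊ : ℝ) / x ^ (⌊x⌋₊ + 1) ∧
        (Nat.factorial ⌊x⌋₊ : ℝ) / x ^ (⌊x⌋₊ + 1) ≤
          c₂ * x ^ (-(1 : ℝ) / 2) * Real.exp (-x)) ∧
      (∀ k : ℕ, c₁ * x ^ (-(1 : ℝ) / 2) * Real.exp (-x) ≤
          (Nat.factorial k : ℝ) / x ^ (k + 1)) ∧
      (∃ k : ℕ, (Nat.factorial k : ℝ) / x ^ (k + 1) ≤
          c₂ * x ^ (-(1 : ℝ) / 2) * Real.exp (-x)) := by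
  refine ⟨√π / exp 1, by positivity, exp 1 ^ 2, by positivity, fun x hx => ?_⟩
  have hx0 : 0 < x := by linarith
  set n := ⌊x⌋₊
  have hn : n ≠ 0 := (Nat.floor_pos.2 hx).ne'
  have hnx : (n : ℝ) ≤ x := Nat.floor_le hx0.le
  have hxn : x ≤ n + 1 := (Nat.lt_floor_add_one x).le
  have hstirling := Stirling.sqrt_pi_le_stirlingSeq hn
  have hfactor := inv_exp_one_le_floorStirlingFactor hn hnx hxn
  have lower : √π / exp 1 * x ^ (-(1 : ℝ) / 2) * exp (-x) ≤ (n ! : ℝ) / x ^ (n + 1) := by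
    rw [factorial_div_pow_succ_eq hn hx0, div_eq_mul_inv, mul_assoc _ (x ^ _)]
    gcongr
    exact hstirling.trans' (sqrt_nonneg π)
  have upper : (n ! : ℝ) / x ^ (n + 1) ≤ exp 1 ^ 2 * x ^ (-(1 : ℝ) / 2) * exp (-x) := by
    calc _ ≤ exp 1 / √2 * (√2 * exp 1) * (x ^ (-(1 : ℝ) / 2) * exp (-x)) := by
          rw [factorial_div_pow_succ_eq hn hx0]
          gcongr
          · exact hfactor.trans' (by positivity)
          · exact Stirling.stirlingSeq_le_exp_one_div_sqrt_two hn
          · exact floorStirlingFactor_le hnx hxn hx0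
      _ = _ := by field_simp
  exact ⟨⟨lower, upper⟩,
    fun k => lower.trans (factorial_div_pow_succ_le_of_le_of_le_add_one hnx hxn hx0 k), n, upper⟩
end

section
/- Let n ≥ 1. The set of vectors λ = (λ₁, …, λₙ) ∈ ℂⁿ for which there exist m, m′ ∈ ℤⁿ and α ∈ ℝ with ∑_{i=1}^n (m_i − α m′_i) λ_i = 0 and (m₁, …, mₙ) ≠ α·(m′₁, …, m′ₙ) (as vectors of real numbers) has Lebesgue measure zero in ℂⁿ (identified with ℝ^{2n}). -/
/-!
If `∑ (mᵢ - α m'ᵢ) λᵢ = 0` with `m - α m' ≠ 0`, write `A = ∑ mᵢ λᵢ` and `B = ∑ m'ᵢ λᵢ`, so that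
`A = α B`. If `B = 0`, then `λ` lies on one of the countably many complex hyperplanes
`∑ kᵢ λᵢ = 0` with `k ∈ ℤⁿ` nonzero. Otherwise the `ℂ`-linear map `λ ↦ (A, B) : ℂⁿ → ℂ²` is
surjective and sends `λ` into the set of `ℝ`-collinear pairs `Im (conj A * B) = 0`; this set is
null by Fubini (each slice with `A ≠ 0` is a real line), and preimages of null sets under
surjective linear maps are null. There are only countably many pairs `(m, m')`.
-/

open MeasureTheory Measure Function ComplexConjugate

section HaarPreimage

variable {𝕜 E F : Type*} [NontriviallyNormedField 𝕜] [CompleteSpace 𝕜]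
  [NormedAddCommGroup E] [MeasurableSpace E] [BorelSpace E] [NormedSpace 𝕜 E]
  [LocallyCompactSpace E]
  [NormedAddCommGroup F] [MeasurableSpace F] [BorelSpace F] [NormedSpace 𝕜 F]
  {μ : Measure E} {ν : Measure F} [IsAddHaarMeasure μ] [IsAddHaarMeasure ν]

theorem LinearMap.addHaar_preimage_eq_zero (L : E →ₗ[𝕜] F) (hL : Surjective L) {s : Set F}
    (hs : MeasurableSet s) (h : ν s = 0) : μ (L ⁻¹' s) = 0 :=
  measure_eq_zero_iff_ae_notMem.2 <|
    (ae_comp_linearMap_mem_iff L μ ν hL hs.compl).2 (measure_eq_zero_iff_ae_notMem.1 h)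

end HaarPreimage

theorem LinearMap.prod_surjective_of_apply_eq_mul {K V : Type*} [Field K] [AddCommGroup V]
    [Module K V] {φ ψ : V →ₗ[K] K} {v : V} {a : K} (hψ : ψ v ≠ 0) (hφ : φ v = a * ψ v)
    (h : φ ≠ a • ψ) : Surjective (φ.prod ψ) := by
  obtain ⟨u, hφu, hψu⟩ : ∃ u, φ u = a ∧ ψ u = 1 :=
    ⟨(ψ v)⁻¹ • v, by simp [hφ, hψ, mul_left_comm], by simp [hψ]⟩
  obtain ⟨w, hw⟩ : ∃ w, φ w - ψ w * a ≠ 0 := by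
    by_contra! hw
    exact h (LinearMap.ext fun w => by simpa [mul_comm] using sub_eq_zero.1 (hw w))
  obtain ⟨w', hφw', hψw'⟩ : ∃ w', φ w' = 1 ∧ ψ w' = 0 :=
    ⟨(φ w - ψ w * a)⁻¹ • (w - ψ w • u), by simp [hφu, hw], by simp [hψu]⟩
  rintro ⟨x, y⟩
  refine ⟨(x - a * y) • w' + y • u, ?_⟩
  simp [hφu, hψu, hφw', hψw', mul_comm]

namespace Complex

theorem volume_setOf_im_mul_eq_zero {a : ℂ} (ha : a ≠ 0) :
    volume {z : ℂ | (a * z).im = 0} = 0 := by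
  have hker : {z : ℂ | (a * z).im = 0} = LinearMap.ker (imLm ∘ₗ LinearMap.mulLeft ℝ a) := by
    ext z; simp
  rw [hker]
  refine addHaar_submodule _ _ fun htop => ?_
  have := htop ▸ Submodule.mem_top (x := a⁻¹ * I)
  simp [ha] at this

theorem volume_setOf_im_conj_mul_eq_zero :
    volume {p : ℂ × ℂ | (conj p.1 * p.2).im = 0} = 0 := by
  have hs : MeasurableSet {p : ℂ × ℂ | (conj p.1 * p.2).im = 0} :=
    measurableSet_eq_fun (by fun_prop) measurable_const
  rw [Measure.volume_eq_prod, measure_prod_null hs]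
  have hne : ∀ᵐ a : ℂ, a ≠ 0 := by simp [ae_iff, measure_singleton]
  filter_upwards [hne] with a ha
  exact volume_setOf_im_mul_eq_zero ((map_ne_zero _).2 ha)

end Complex

section IntDot

variable {ι : Type*} [Fintype ι]

noncomputable def intDot (k : ι → ℤ) : (ι → ℂ) →ₗ[ℂ] ℂ :=
  dotProductBilin ℂ ℂ fun i => (k i : ℂ)

@[simp]
theorem intDot_apply (k : ι → ℤ) (l : ι → ℂ) : intDot k l = ∑ i, k i * l i := rfl

theorem intDot_single [DecidableEq ι] (k : ι → ℤ) (i : ι) : intDot k (Pi.single i 1) = k i := by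
  simp [Pi.single_apply]

theorem volume_setOf_intDot_eq_zero {k : ι → ℤ} (hk : intDot k ≠ 0) :
    volume {l | intDot k l = 0} = 0 :=
  (intDot k).addHaar_preimage_eq_zero (LinearMap.surjective_of_ne_zero hk)
    (measurableSet_singleton 0) (measure_singleton (μ := volume) 0)

theorem volume_setOf_intDot_collinear {m m' : ι → ℤ}
    (h : Surjective ((intDot m).prod (intDot m'))) :
    volume {l | (conj (intDot m l) * intDot m' l).im = 0} = 0 :=
  ((intDot m).prod (intDot m')).addHaar_preimage_eq_zero (ν := volume.prod volume) h
    (measurableSet_eq_fun (by fun_prop) measurable_const) Complex.volume_setOf_im_conj_mul_eq_zero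

theorem exists_intDot_eq_zero_or_collinear {l : ι → ℂ} {m m' : ι → ℤ} {α : ℝ}
    (hl : ∑ i, ((m i : ℂ) - α * m' i) * l i = 0) (hm : ¬ ∀ i, (m i : ℝ) = α * m' i) :
    (∃ k, intDot k ≠ 0 ∧ intDot k l = 0) ∨
      Surjective ((intDot m).prod (intDot m')) ∧ (conj (intDot m l) * intDot m' l).im = 0 := by
  classical
  have hAB : intDot m l = α * intDot m' l := by
    rw [← sub_eq_zero, ← hl]
    simp [sub_mul, Finset.sum_sub_distrib, Finset.mul_sum, mul_assoc]
  have hne : intDot m ≠ (α : ℂ) • intDot m' := fun h => hm fun i => by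
    have := LinearMap.congr_fun h (Pi.single i 1)
    rw [LinearMap.smul_apply, intDot_single, intDot_single, smul_eq_mul] at this
    exact_mod_cast this
  by_cases hB : intDot m' l = 0
  · refine .inl ?_
    by_cases hA : intDot m = 0
    · exact ⟨m', fun h => hne (by simp [hA, h]), hB⟩
    · exact ⟨m, hA, by rw [hAB, hB, mul_zero]⟩
  · refine .inr ⟨LinearMap.prod_surjective_of_apply_eq_mul hB hAB hne, ?_⟩
    rw [hAB, map_mul, Complex.conj_ofReal, mul_assoc, ← Complex.normSq_eq_conj_mul_self,
      ← Complex.ofReal_mul, Complex.ofReal_im]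

end IntDot

theorem stmt_15_general (n : ℕ) :
    volume {l : Fin n → ℂ |
      ∃ (m m' : Fin n → ℤ) (α : ℝ),
        (∑ i, ((m i : ℂ) - (α : ℂ) * (m' i : ℂ)) * l i = 0) ∧
        ¬ (∀ i, (m i : ℝ) = α * (m' i : ℝ))} = 0 := by
  refine measure_mono_null (t := (⋃ (k) (_ : intDot k ≠ 0), {l | intDot k l = 0}) ∪
      ⋃ (m) (m') (_ : Surjective ((intDot m).prod (intDot m'))),
        {l | (conj (intDot m l) * intDot m' l).im = 0}) ?_ ?_
  · rintro l ⟨m, m', α, hl, hm⟩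
    rcases exists_intDot_eq_zero_or_collinear hl hm with ⟨k, hk, hkl⟩ | ⟨hsurj, hcol⟩
    · exact .inl (Set.mem_biUnion hk hkl)
    · exact .inr (Set.mem_iUnion₂.2 ⟨m, m', Set.mem_iUnion.2 ⟨hsurj, hcol⟩⟩)
  · refine measure_union_null (measure_iUnion_null fun k => measure_iUnion_null fun hk => ?_)
      (measure_iUnion_null fun m => measure_iUnion_null fun m' => measure_iUnion_null fun h => ?_)
    · exact volume_setOf_intDot_eq_zero hk
    · exact volume_setOf_intDot_collinear h

/-- The set of eigenvalue vectors violating the strong nonresonance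
condition—i.e. admitting `m, m' ∈ ℤⁿ` and `α ∈ ℝ` with
`∑ (mᵢ - α m'ᵢ) λᵢ = 0` but `m ≠ α m'`—has Lebesgue measure zero in `ℂⁿ`. -/
theorem stmt_15 (n : ℕ) (hn : 1 ≤ n) :
    volume {l : Fin n → ℂ |
      ∃ (m m' : Fin n → ℤ) (α : ℝ),
        (∑ i, ((m i : ℂ) - (α : ℂ) * (m' i : ℂ)) * l i = 0) ∧
        ¬ (∀ i, (m i : ℝ) = α * (m' i : ℝ))} = 0 :=
  stmt_15_general n
end

section
/- Let ρ > 0, let β₁, β₂ ∈ ℂ with Re β₁ > 0 and Re β₂ > 0, and let F, G be analytic on the disc D = {p ∈ ℂ : |p| < ρ}. Define f(p) = p^{β₁} F(p) and g(p) = p^{β₂} G(p) for p ∈ D ∖ (−∞, 0], using the principal branch w^β = exp(β log w). Then there exists a function H analytic on all of D such that for every p ∈ D ∖ (−∞, 0], the convolution ∫_{[0,p]} f(s) g(p − s) ds (integral along the straight segment from 0 to p) equals p^{β₁+β₂+1} H(p); moreover H(0) = F(0) G(0) Γ(β₁+1) Γ(β₂+1) / Γ(β₁+β₂+2). -/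
/-!
Substituting `s = t p` turns the convolution into
`p ^ (β₁ + β₂ + 1) * ∫₀¹ t ^ β₁ (1 - t) ^ β₂ F (t p) G ((1 - t) p) dt`, because
`(t p) ^ β = t ^ β p ^ β` for real `t ≥ 0` and `p ≠ 0`. The remaining integral is holomorphic
in `p` on the whole disc, since it integrates a family of holomorphic functions, bounded on
compacta, against the integrable Beta weight (derivatives are dominated by Cauchy estimates).
At `p = 0` it is `F 0 G 0 B(β₁ + 1, β₂ + 1)`.
-/

open Set Metric Filter Topology MeasureTheory Complex

open scoped Interval

section ParametricIntegral

variable {E : Type*} [NormedAddCommGroup E] [NormedSpace ℂ E]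

theorem aestronglyMeasurable_deriv_of_continuousOn {μ : Measure ℝ} {s : Set ℝ}
    (hs : MeasurableSet s) {Φ : ℂ → ℝ → E} {x₀ : ℂ} {U : Set ℂ} (hU : U ∈ 𝓝 x₀)
    (hΦc : ∀ x ∈ U, ContinuousOn (Φ x) s) (hΦd : ∀ t ∈ s, DifferentiableAt ℂ (Φ · t) x₀) :
    AEStronglyMeasurable (fun t => deriv (Φ · t) x₀) (μ.restrict s) := by
  obtain ⟨δ, hδ, hball⟩ := Metric.mem_nhds_iff.1 hU
  set c : ℕ → ℂ := fun n => x₀ + ((δ / ((n : ℝ) + 2) : ℝ) : ℂ)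
  have hc_mem : ∀ n, c n ∈ U := fun n => hball <| by
    rw [mem_ball, dist_eq_norm, add_sub_cancel_left, norm_real,
      Real.norm_of_nonneg (by positivity)]
    exact div_lt_self hδ (by linarith [n.cast_nonneg (α := ℝ)])
  have hc_lim : Tendsto c atTop (𝓝[≠] x₀) := by
    refine tendsto_nhdsWithin_iff.2 ⟨?_, Eventually.of_forall fun n => ?_⟩
    · have h : Tendsto (fun n : ℕ => δ / ((n : ℝ) + 2)) atTop (𝓝 0) :=
        tendsto_const_nhds.div_atTop (tendsto_natCast_atTop_atTop.atTop_add tendsto_const_nhds)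
      simpa [c] using h.ofReal.const_add x₀
    · simp only [c, mem_compl_iff, mem_singleton_iff, add_eq_left, ofReal_eq_zero]
      positivity
  -- `deriv (Φ · t) x₀` is the pointwise limit of difference quotients continuous in `t`.
  refine aestronglyMeasurable_of_tendsto_ae atTop
    (f := fun n t => slope (Φ · t) x₀ (c n)) (fun n => ?_) ?_
  · simp only [slope_def_module]
    exact (((hΦc _ (hc_mem n)).sub (hΦc _ (mem_of_mem_nhds hU))).const_smul _).aestronglyMeasurable
      hs
  · exact (ae_restrict_mem hs).mono fun t ht =>
      (hasDerivAt_iff_tendsto_slope.1 (hΦd t ht).hasDerivAt).comp hc_lim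

theorem differentiableOn_intervalIntegral_smul [CompleteSpace E] {U : Set ℂ} (hU : IsOpen U)
    {a b : ℝ} {w : ℝ → ℂ} (hw : IntervalIntegrable w volume a b) {Φ : ℂ → ℝ → E}
    (hΦc : ContinuousOn (Function.uncurry Φ) (U ×ˢ [[a, b]]))
    (hΦd : ∀ t ∈ [[a, b]], DifferentiableOn ℂ (Φ · t) U) :
    DifferentiableOn ℂ (fun x => ∫ t in a..b, w t • Φ x t) U := by
  intro x₀ hx₀
  have hslice : ∀ x ∈ U, ContinuousOn (Φ x) [[a, b]] := fun x hx =>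
    hΦc.comp (Continuous.prodMk_right x).continuousOn fun t ht => ⟨hx, ht⟩
  obtain ⟨δ, hδ, hK⟩ : ∃ δ > 0, closedBall x₀ (2 * δ) ⊆ U := by
    obtain ⟨ε, hε, hεU⟩ := Metric.isOpen_iff.1 hU x₀ hx₀
    exact ⟨ε / 3, by positivity, (closedBall_subset_ball (by linarith)).trans hεU⟩
  have hball : ball x₀ δ ⊆ U :=
    ball_subset_closedBall.trans ((closedBall_subset_closedBall (by linarith)).trans hK)
  obtain ⟨C, hC⟩ := ((isCompact_closedBall x₀ (2 * δ)).prod isCompact_uIcc)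
    |>.exists_bound_of_continuousOn (hΦc.mono (prod_mono hK subset_rfl))
  have hderiv_le : ∀ t ∈ [[a, b]], ∀ x ∈ ball x₀ δ, ‖deriv (Φ · t) x‖ ≤ C / δ := by
    intro t ht x hx
    have hx' : closedBall x δ ⊆ closedBall x₀ (2 * δ) := closedBall_subset_closedBall'
      (by rw [mem_ball] at hx; linarith)
    refine norm_deriv_le_of_forall_mem_sphere_norm_le hδ
      ((hΦd t ht).diffContOnCl_ball (hx'.trans hK)) fun z hz => hC (z, t) ⟨?_, ht⟩
    exact hx' (sphere_subset_closedBall hz)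
  have hw_meas := hw.def'.aestronglyMeasurable
  refine (intervalIntegral.hasDerivAt_integral_of_dominated_loc_of_deriv_le
    (F' := fun x t => w t • deriv (Φ · t) x) (bound := fun t => ‖w t‖ * (C / δ))
    (ball_mem_nhds x₀ hδ) ?_ ?_ ?_ ?_ ?_ ?_).2.differentiableAt.differentiableWithinAt
  · filter_upwards [hU.mem_nhds hx₀] with x hx
    exact hw_meas.smul (((hslice x hx).mono uIoc_subset_uIcc).aestronglyMeasurable
      measurableSet_uIoc)
  · exact intervalIntegrable_iff.2 (hw.def'.smul_continuousOn_of_subset (hslice x₀ hx₀)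
      measurableSet_uIoc isCompact_uIcc uIoc_subset_uIcc)
  · exact hw_meas.smul (aestronglyMeasurable_deriv_of_continuousOn measurableSet_uIoc
      (hU.mem_nhds hx₀) (fun x hx => (hslice x hx).mono uIoc_subset_uIcc)
      fun t ht => (hΦd t (uIoc_subset_uIcc ht)).differentiableAt (hU.mem_nhds hx₀))
  · refine ae_of_all _ fun t ht x hx => ?_
    rw [norm_smul]
    exact mul_le_mul_of_nonneg_left (hderiv_le t (uIoc_subset_uIcc ht) x hx) (norm_nonneg _)
  · exact hw.norm.mul_const _
  · exact ae_of_all _ fun t ht x hx =>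
      (((hΦd t (uIoc_subset_uIcc ht)).differentiableAt
        (hU.mem_nhds (hball hx))).hasDerivAt).const_smul (w t)

end ParametricIntegral

theorem ofReal_mul_cpow {r : ℝ} (hr : 0 ≤ r) {z : ℂ} (hz : z ≠ 0) (β : ℂ) :
    ((r : ℂ) * z) ^ β = (r : ℂ) ^ β * z ^ β := by
  rcases eq_or_ne β 0 with rfl | hβ
  · simp
  rcases hr.eq_or_lt with rfl | hr
  · simp [zero_cpow hβ]
  have hr0 : (r : ℂ) ≠ 0 := ofReal_ne_zero.2 hr.ne'
  rw [cpow_def_of_ne_zero (mul_ne_zero hr0 hz), log_ofReal_mul hr hz, ofReal_log hr.le, add_mul,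
    exp_add, ← cpow_def_of_ne_zero hr0, ← cpow_def_of_ne_zero hz]

theorem mul_mem_ball_zero {ρ : ℝ} {c x : ℂ} (hc : ‖c‖ ≤ 1) (hx : x ∈ ball (0 : ℂ) ρ) :
    c * x ∈ ball (0 : ℂ) ρ := by
  rw [mem_ball_zero_iff] at hx ⊢
  calc ‖c * x‖ = ‖c‖ * ‖x‖ := norm_mul _ _
    _ ≤ ‖x‖ := mul_le_of_le_one_left (norm_nonneg _) hc
    _ < ρ := hx

theorem norm_ofReal_le_one {t : ℝ} (ht : t ∈ Icc (0 : ℝ) 1) : ‖(t : ℂ)‖ ≤ 1 := by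
  rw [norm_real, Real.norm_of_nonneg ht.1]
  exact ht.2

theorem norm_one_sub_ofReal_le_one {t : ℝ} (ht : t ∈ Icc (0 : ℝ) 1) : ‖1 - (t : ℂ)‖ ≤ 1 := by
  rw [← ofReal_one, ← ofReal_sub]
  exact norm_ofReal_le_one ⟨by linarith [ht.2], by linarith [ht.1]⟩

theorem intervalIntegrable_cpow_mul_one_sub_cpow {u v : ℂ} (hu : -1 < u.re) (hv : -1 < v.re) :
    IntervalIntegrable (fun t : ℝ => (t : ℂ) ^ u * (1 - (t : ℂ)) ^ v) volume 0 1 := by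
  simpa using betaIntegral_convergent (u := u + 1) (v := v + 1) (by simp; linarith)
    (by simp; linarith)

theorem integral_cpow_mul_one_sub_cpow {u v : ℂ} (hu : -1 < u.re) (hv : -1 < v.re) :
    ∫ t in (0 : ℝ)..1, (t : ℂ) ^ u * (1 - (t : ℂ)) ^ v =
      Gamma (u + 1) * Gamma (v + 1) / Gamma (u + v + 2) := by
  have := betaIntegral_eq_Gamma_mul_div (u + 1) (v + 1) (by simp; linarith) (by simp; linarith)
  simp only [betaIntegral, add_sub_cancel_right] at this
  rw [this]
  ring_nf

noncomputable def convolutionFactor (β₁ β₂ : ℂ) (F G : ℂ → ℂ) (x : ℂ) : ℂ :=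
  ∫ t in (0 : ℝ)..1, ((t : ℂ) ^ β₁ * (1 - (t : ℂ)) ^ β₂) * (F (t * x) * G ((1 - t) * x))

section ConvolutionFactor

variable {β₁ β₂ : ℂ} {F G : ℂ → ℂ} {ρ : ℝ}

theorem differentiableOn_convolutionFactor (hβ₁ : -1 < β₁.re) (hβ₂ : -1 < β₂.re)
    (hF : DifferentiableOn ℂ F (ball 0 ρ)) (hG : DifferentiableOn ℂ G (ball 0 ρ)) :
    DifferentiableOn ℂ (convolutionFactor β₁ β₂ F G) (ball 0 ρ) := by
  have hmaps : ∀ x ∈ ball (0 : ℂ) ρ, ∀ t ∈ [[(0 : ℝ), 1]],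
      (t : ℂ) * x ∈ ball (0 : ℂ) ρ ∧ (1 - (t : ℂ)) * x ∈ ball (0 : ℂ) ρ := by
    intro x hx t ht
    rw [uIcc_of_le zero_le_one] at ht
    exact ⟨mul_mem_ball_zero (norm_ofReal_le_one ht) hx,
      mul_mem_ball_zero (norm_one_sub_ofReal_le_one ht) hx⟩
  refine differentiableOn_intervalIntegral_smul isOpen_ball
    (intervalIntegrable_cpow_mul_one_sub_cpow hβ₁ hβ₂) ?_ fun t ht => ?_
  · exact (hF.continuousOn.comp (by fun_prop) fun p hp => (hmaps p.1 hp.1 p.2 hp.2).1).mul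
      (hG.continuousOn.comp (by fun_prop) fun p hp => (hmaps p.1 hp.1 p.2 hp.2).2)
  · exact (hF.comp (by fun_prop) fun x hx => (hmaps x hx t ht).1).mul
      (hG.comp (by fun_prop) fun x hx => (hmaps x hx t ht).2)

theorem convolutionFactor_zero (hβ₁ : -1 < β₁.re) (hβ₂ : -1 < β₂.re) :
    convolutionFactor β₁ β₂ F G 0 = F 0 * G 0 * Gamma (β₁ + 1) * Gamma (β₂ + 1) /
      Gamma (β₁ + β₂ + 2) := by
  simp only [convolutionFactor, mul_zero, intervalIntegral.integral_mul_const]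
  rw [integral_cpow_mul_one_sub_cpow hβ₁ hβ₂]
  ring

theorem integral_convolution_eq_cpow_mul_convolutionFactor {p : ℂ} (hp : p ≠ 0) :
    (∫ t in (0 : ℝ)..1, ((t : ℂ) * p) ^ β₁ * F ((t : ℂ) * p) *
        ((1 - (t : ℂ)) * p) ^ β₂ * G ((1 - (t : ℂ)) * p) * p) =
      p ^ (β₁ + β₂ + 1) * convolutionFactor β₁ β₂ F G p := by
  rw [convolutionFactor, ← intervalIntegral.integral_const_mul]
  refine intervalIntegral.integral_congr fun t ht => ?_
  rw [uIcc_of_le zero_le_one] at ht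
  have h1t : (1 : ℂ) - (t : ℂ) = ((1 - t : ℝ) : ℂ) := by push_cast; ring
  rw [ofReal_mul_cpow ht.1 hp, h1t, ofReal_mul_cpow (by linarith [ht.2]) hp,
    cpow_add _ _ hp, cpow_add _ _ hp, cpow_one]
  ring

end ConvolutionFactor

theorem stmt_17_general (ρ : ℝ) (β₁ β₂ : ℂ)
    (hβ₁ : 0 < β₁.re) (hβ₂ : 0 < β₂.re) (F G : ℂ → ℂ)
    (hF : DifferentiableOn ℂ F (Metric.ball 0 ρ))
    (hG : DifferentiableOn ℂ G (Metric.ball 0 ρ)) :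
    ∃ H : ℂ → ℂ, DifferentiableOn ℂ H (Metric.ball 0 ρ) ∧
      H 0 = F 0 * G 0 * Complex.Gamma (β₁ + 1) * Complex.Gamma (β₂ + 1) /
        Complex.Gamma (β₁ + β₂ + 2) ∧
      ∀ p ∈ Metric.ball (0 : ℂ) ρ, ¬ (p.im = 0 ∧ p.re ≤ 0) →
        (∫ t in (0 : ℝ)..1,
            ((t : ℂ) * p) ^ β₁ * F ((t : ℂ) * p) *
              ((1 - (t : ℂ)) * p) ^ β₂ * G ((1 - (t : ℂ)) * p) * p) =
          p ^ (β₁ + β₂ + 1) * H p := by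
  have hβ₁' : -1 < β₁.re := by linarith
  have hβ₂' : -1 < β₂.re := by linarith
  refine ⟨convolutionFactor β₁ β₂ F G, differentiableOn_convolutionFactor hβ₁' hβ₂' hF hG,
    convolutionFactor_zero hβ₁' hβ₂', fun p _ hslit => ?_⟩
  have hp : p ≠ 0 := by
    rintro rfl
    exact hslit ⟨rfl, le_rfl⟩
  exact integral_convolution_eq_cpow_mul_convolutionFactor hp

/-- Convolution maps `𝒯_{β₁} × 𝒯_{β₂}` into `𝒯_{β₁+β₂+1}`: if
`f(p) = p^{β₁}F(p)` and `g(p) = p^{β₂}G(p)` with `F, G` analytic on the disc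
of radius `ρ`, then `(f*g)(p) = ∫_{[0,p]} f(s)g(p-s)ds = p^{β₁+β₂+1}H(p)`
with `H` analytic on the whole disc and
`H(0) = F(0)G(0)Γ(β₁+1)Γ(β₂+1)/Γ(β₁+β₂+2)`. -/
theorem stmt_17 (ρ : ℝ) (hρ : 0 < ρ) (β₁ β₂ : ℂ)
    (hβ₁ : 0 < β₁.re) (hβ₂ : 0 < β₂.re) (F G : ℂ → ℂ)
    (hF : DifferentiableOn ℂ F (Metric.ball 0 ρ))
    (hG : DifferentiableOn ℂ G (Metric.ball 0 ρ)) :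
    ∃ H : ℂ → ℂ, DifferentiableOn ℂ H (Metric.ball 0 ρ) ∧
      H 0 = F 0 * G 0 * Complex.Gamma (β₁ + 1) * Complex.Gamma (β₂ + 1) /
        Complex.Gamma (β₁ + β₂ + 2) ∧
      ∀ p ∈ Metric.ball (0 : ℂ) ρ, ¬ (p.im = 0 ∧ p.re ≤ 0) →
        (∫ t in (0 : ℝ)..1,
            ((t : ℂ) * p) ^ β₁ * F ((t : ℂ) * p) *
              ((1 - (t : ℂ)) * p) ^ β₂ * G ((1 - (t : ℂ)) * p) * p) =
          p ^ (β₁ + β₂ + 1) * H p :=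
  stmt_17_general ρ β₁ β₂ hβ₁ hβ₂ F G hF hG
end
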